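/- arXiv:2108.09168 — 10 statements merged into one kernel-verified Lean document; each statement's English description precedes it below -/
import Mathlib

section
/- In a dually pseudo-complemented join semilattice with 0 and greatest element 1, for all elements a and b, (a + b)** = a** + b**, where * denotes dual pseudo-complementation and ** its double application. -/
/-!
Writing `a*` for `star a`, the two defining properties say exactly that `a ⊔ b = ⊤ ↔ a* ≤ b`.
From this, `*` is antitone, `a** ≤ a` and `a*** = a*`; hence `a ⊔ b = ⊤ ↔ a** ⊔ b = ⊤`,
since both sides say `a* ≤ b`. Starting from `a ⊔ b ⊔ (a ⊔ b)* = ⊤`, replace `a` and then `b`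
by their double stars to get `(a ⊔ b)* ⊔ (a** ⊔ b**) = ⊤`, i.e. `(a ⊔ b)** ≤ a** ⊔ b**`;
the reverse inequality is monotonicity of `**`.
-/

section DualPseudoComplement

variable {S : Type*} [SemilatticeSup S] [OrderTop S] {star : S → S}

theorem sup_eq_top_iff_star_le (hjoin : ∀ a : S, a ⊔ star a = ⊤)
    (hleast : ∀ a b : S, a ⊔ b = ⊤ → star a ≤ b) (a b : S) :
    a ⊔ b = ⊤ ↔ star a ≤ b :=
  ⟨hleast a b, fun h => top_le_iff.mp (hjoin a ▸ sup_le_sup_left h a)⟩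

theorem star_antitone_of_sup_eq_top_iff (h : ∀ a b : S, a ⊔ b = ⊤ ↔ star a ≤ b) :
    Antitone star := fun x y hxy =>
  (h y (star x)).mp <| top_le_iff.mp <| ((h x (star x)).mpr le_rfl) ▸ sup_le_sup_right hxy _

theorem star_star_le_of_sup_eq_top_iff (h : ∀ a b : S, a ⊔ b = ⊤ ↔ star a ≤ b) (a : S) :
    star (star a) ≤ a :=
  (h (star a) a).mp (sup_comm a (star a) ▸ (h a (star a)).mpr le_rfl)

theorem star_star_star_of_sup_eq_top_iff (h : ∀ a b : S, a ⊔ b = ⊤ ↔ star a ≤ b) (a : S) :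
    star (star (star a)) = star a :=
  le_antisymm (star_star_le_of_sup_eq_top_iff h (star a))
    (star_antitone_of_sup_eq_top_iff h (star_star_le_of_sup_eq_top_iff h a))

theorem star_star_sup_eq_top_iff (h : ∀ a b : S, a ⊔ b = ⊤ ↔ star a ≤ b) (a b : S) :
    star (star a) ⊔ b = ⊤ ↔ a ⊔ b = ⊤ := by
  rw [h, h, star_star_star_of_sup_eq_top_iff h]

end DualPseudoComplement

theorem stmt_0_general (S : Type*) [SemilatticeSup S] [OrderTop S]
    (star : S → S)
    (hjoin : ∀ a : S, a ⊔ star a = ⊤)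
    (hleast : ∀ a b : S, a ⊔ b = ⊤ → star a ≤ b)
    (a b : S) :
    star (star (a ⊔ b)) = star (star a) ⊔ star (star b) := by
  have h := sup_eq_top_iff_star_le hjoin hleast
  have hstar₂ : Monotone (star ∘ star) :=
    (star_antitone_of_sup_eq_top_iff h).comp (star_antitone_of_sup_eq_top_iff h)
  refine le_antisymm ((h _ _).mp ?_) (sup_le (hstar₂ le_sup_left) (hstar₂ le_sup_right))
  have hab : star (star b) ⊔ (star (star a) ⊔ star (a ⊔ b)) = ⊤ := by
    rw [star_star_sup_eq_top_iff h, sup_left_comm, star_star_sup_eq_top_iff h, ← sup_assoc, hjoin]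
  rw [← hab]
  ac_rfl

/-- In a dually pseudo-complemented join semilattice with 0 and greatest element 1,
(a + b)** = a** + b**. -/
theorem stmt_0 (S : Type*) [SemilatticeSup S] [OrderBot S] [OrderTop S]
    (star : S → S)
    (hjoin : ∀ a : S, a ⊔ star a = ⊤)
    (hleast : ∀ a b : S, a ⊔ b = ⊤ → star a ≤ b)
    (a b : S) :
    star (star (a ⊔ b)) = star (star a) ⊔ star (star b) :=
  stmt_0_general S star hjoin hleast a b
end

section
/- Let L be an algebraic lattice whose join-semilattice of compact elements is dually pseudo-complemented, let 1 be the greatest element of L, and let a ∈ L with a ≠ 1. If 1 is join-irreducible in the interval [a,1], then the interval [a,1) = {d ∈ L : a ≤ d < 1} has a greatest element. -/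
/-!
Applied to `⊥`, dual pseudo-complementation gives `⊥* = ⊤`, so `⊤` is compact. Join-irreducibility
of `⊤` above `a` makes `[a, ⊤)` closed under joins, hence directed, and a directed set of elements
strictly below a compact element has its supremum strictly below it. So `sSup [a, ⊤)` lies in
`[a, ⊤)` and is its greatest element.
-/

open CompleteLattice

lemma isCompactElement_bot {α : Type*} [PartialOrder α] [OrderBot α] :
    IsCompactElement (⊥ : α) :=
  fun _ _ hne _ _ _ => ⟨hne.some, hne.some_mem, bot_le⟩

lemma supClosed_Ico_top {α : Type*} [Lattice α] [OrderTop α] {a : α}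
    (hji : ∀ x y : α, a ≤ x → a ≤ y → x ⊔ y = ⊤ → x = ⊤ ∨ y = ⊤) :
    SupClosed (Set.Ico a ⊤) := by
  rintro x ⟨hax, hx⟩ y ⟨hay, hy⟩
  refine ⟨le_sup_of_le_left hax, lt_top_iff_ne_top.2 fun hxy => ?_⟩
  rcases hji x y hax hay hxy with h | h
  exacts [hx.ne h, hy.ne h]

lemma isGreatest_Ico_top_sSup {α : Type*} [CompleteLattice α] (htop : IsCompactElement (⊤ : α))
    {a : α} (ha : a ≠ ⊤) (hji : ∀ x y : α, a ≤ x → a ≤ y → x ⊔ y = ⊤ → x = ⊤ ∨ y = ⊤) :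
    IsGreatest (Set.Ico a ⊤) (sSup (Set.Ico a ⊤)) := by
  have ha_mem : a ∈ Set.Ico a ⊤ := ⟨le_rfl, lt_top_iff_ne_top.2 ha⟩
  have hlt : sSup (Set.Ico a ⊤) < ⊤ :=
    htop.directed_sSup_lt_of_lt ⟨a, ha_mem⟩ (supClosed_Ico_top hji).directedOn fun _ hx => hx.2
  exact ⟨⟨le_sSup ha_mem, hlt⟩, fun _ hd => le_sSup hd⟩

theorem stmt_3_general (L : Type*) [CompleteLattice L]
    (star : L → L)
    (hstar_cpt : ∀ c : L, IsCompactElement c → IsCompactElement (star c))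
    (hjoin : ∀ c : L, IsCompactElement c → c ⊔ star c = ⊤)
    (a : L) (ha : a ≠ ⊤)
    (hji : ∀ x y : L, a ≤ x → a ≤ y → x ⊔ y = ⊤ → x = ⊤ ∨ y = ⊤) :
    ∃ m : L, a ≤ m ∧ m < ⊤ ∧ ∀ d : L, a ≤ d → d < ⊤ → d ≤ m := by
  have hstar_bot : star ⊥ = ⊤ := by simpa using hjoin ⊥ isCompactElement_bot
  have htop : IsCompactElement (⊤ : L) := hstar_bot ▸ hstar_cpt ⊥ isCompactElement_bot
  obtain ⟨⟨ham, hmt⟩, hmax⟩ := isGreatest_Ico_top_sSup htop ha hji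
  exact ⟨_, ham, hmt, fun d had hdt => hmax ⟨had, hdt⟩⟩

/-- If 1 is join-irreducible in the interval [a,1], then [a,1) has a greatest element. -/
theorem stmt_3 (L : Type*) [CompleteLattice L] [IsCompactlyGenerated L]
    (star : L → L)
    (hstar_cpt : ∀ c : L, IsCompactElement c → IsCompactElement (star c))
    (hjoin : ∀ c : L, IsCompactElement c → c ⊔ star c = ⊤)
    (hleast : ∀ c b : L, IsCompactElement c → IsCompactElement b → c ⊔ b = ⊤ → star c ≤ b)
    (a : L) (ha : a ≠ ⊤)
    (hji : ∀ x y : L, a ≤ x → a ≤ y → x ⊔ y = ⊤ → x = ⊤ ∨ y = ⊤) :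
    ∃ m : L, a ≤ m ∧ m < ⊤ ∧ ∀ d : L, a ≤ d → d < ⊤ → d ≤ m :=
  stmt_3_general L star hstar_cpt hjoin a ha hji
end

section
/- Let L be an algebraic lattice whose join-semilattice of compact elements is dually pseudo-complemented, with greatest element 1. If c is compact, d ∈ L, and c + d = 1, then c* ≤ d, where c* is the dual pseudo-complement of c among compact elements. Consequently, c* is also the dual pseudo-complement of c in L. -/
/-!
Since `c*` is compact and `c* ≤ ⊤ = c ⊔ d`, compactness lets us replace `d` by a compact
`e ≤ d` with `c* ≤ c ⊔ e`. Then `c ⊔ e ≥ c ⊔ c* = ⊤`, so minimality of `c*` among compact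
elements gives `c* ≤ e ≤ d`.
-/

open CompleteLattice

theorem CompleteLattice.IsCompactElement.exists_le_sup_of_le_sup {L : Type*} [CompleteLattice L]
    [IsCompactlyGenerated L] {k a d : L} (hk : IsCompactElement k) (h : k ≤ a ⊔ d) :
    ∃ e, IsCompactElement e ∧ e ≤ d ∧ k ≤ a ⊔ e := by
  classical
  set S : Set L := {x | IsCompactElement x ∧ x ≤ d}
  obtain ⟨t, htS, hkt⟩ := (isCompactElement_iff_exists_le_sSup_of_le_sSup L k).mp hk (insert a S)
    (by rwa [sSup_insert, sSup_compact_le_eq])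
  refine ⟨(t.filter (· ∈ S)).sup id,
    isCompactElement_finsetSup _ fun x hx => (Finset.mem_filter.mp hx).2.1,
    Finset.sup_le fun x hx => (Finset.mem_filter.mp hx).2.2,
    hkt.trans (Finset.sup_le fun x hx => ?_)⟩
  rcases htS hx with rfl | hxS
  · exact le_sup_left
  · exact le_sup_of_le_right (Finset.le_sup (f := id) (Finset.mem_filter.mpr ⟨hx, hxS⟩))

/-- If c is compact, d ∈ L, and c + d = 1, then c* ≤ d; consequently c* is the dual
pseudo-complement of c in L. -/
theorem stmt_4 (L : Type*) [CompleteLattice L] [IsCompactlyGenerated L]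
    (star : L → L)
    (hstar_cpt : ∀ c : L, IsCompactElement c → IsCompactElement (star c))
    (hjoin : ∀ c : L, IsCompactElement c → c ⊔ star c = ⊤)
    (hleast : ∀ c b : L, IsCompactElement c → IsCompactElement b → c ⊔ b = ⊤ → star c ≤ b)
    (c : L) (hc : IsCompactElement c) :
    (∀ d : L, c ⊔ d = ⊤ → star c ≤ d) ∧
      (c ⊔ star c = ⊤ ∧ ∀ d : L, c ⊔ d = ⊤ → star c ≤ d) := by
  have star_le : ∀ d : L, c ⊔ d = ⊤ → star c ≤ d := by
    intro d hd
    obtain ⟨e, he, hed, hstar_le⟩ :=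
      (hstar_cpt c hc).exists_le_sup_of_le_sup (hd ▸ le_top : star c ≤ c ⊔ d)
    have hce : c ⊔ e = ⊤ := top_unique (hjoin c hc ▸ sup_le le_sup_left hstar_le)
    exact (hleast c e hc he hce).trans hed
  exact ⟨star_le, hjoin c hc, star_le⟩
end

section
/- Let L be an algebraic lattice whose join-semilattice S of compact elements is dually pseudo-complemented, with greatest element 1. If the identity a = (a + c*) ⊓ (a + c**) holds for all compact a, c ∈ S (where ⊓ denotes greatest lower bound, when it exists), then it holds for all a ∈ L and compact c ∈ S. -/
/-!
In an algebraic lattice `a ⊔ e` is the directed join of the `b ⊔ e` with `b ≤ a` compact, so a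
compact `d ≤ (a ⊔ c*) ⊓ (a ⊔ c**)` already lies below `(b ⊔ c*) ⊓ (b ⊔ c**)` for one compact
`b ≤ a` (join the two witnesses), which equals `b` by the compact case.
-/

open CompleteLattice

namespace CompleteLattice

variable {L : Type*} [CompleteLattice L]

theorem isCompactElement_sup {a b : L} (ha : IsCompactElement a) (hb : IsCompactElement b) :
    IsCompactElement (a ⊔ b) := by
  classical
  simpa using isCompactElement_finsetSup {a, b} (f := id) (by simp [ha, hb])

variable [IsCompactlyGenerated L]

theorem IsCompactElement.exists_le_sup_of_le_sup_s5 {a d e : L} (hd : IsCompactElement d)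
    (hde : d ≤ a ⊔ e) : ∃ b, IsCompactElement b ∧ b ≤ a ∧ d ≤ b ⊔ e := by
  classical
  have ha : a ⊔ e = sSup (insert e {c | IsCompactElement c ∧ c ≤ a}) := by
    rw [sSup_insert, sSup_compact_le_eq, sup_comm]
  obtain ⟨t, hts, hdt⟩ :=
    (isCompactElement_iff_exists_le_sSup_of_le_sSup (k := d)).mp hd _ (ha ▸ hde)
  refine ⟨(t.filter fun x => IsCompactElement x ∧ x ≤ a).sup id,
    isCompactElement_finsetSup _ fun x hx => (Finset.mem_filter.mp hx).2.1,
    Finset.sup_le fun x hx => (Finset.mem_filter.mp hx).2.2,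
    hdt.trans (Finset.sup_le fun x hx => ?_)⟩
  rcases hts hx with rfl | hxa
  · exact le_sup_right
  · exact le_sup_of_le_left (Finset.le_sup (f := id) (Finset.mem_filter.mpr ⟨hx, hxa⟩))

theorem sup_inf_sup_eq_of_forall_isCompactElement {x y : L}
    (h : ∀ b, IsCompactElement b → (b ⊔ x) ⊓ (b ⊔ y) = b) (a : L) :
    (a ⊔ x) ⊓ (a ⊔ y) = a := by
  refine le_antisymm ?_ (le_inf le_sup_left le_sup_left)
  refine le_iff_compact_le_imp.mpr fun d hd hda => ?_
  obtain ⟨b₁, hb₁, hb₁a, hdb₁⟩ := hd.exists_le_sup_of_le_sup_s5 (hda.trans inf_le_left)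
  obtain ⟨b₂, hb₂, hb₂a, hdb₂⟩ := hd.exists_le_sup_of_le_sup_s5 (hda.trans inf_le_right)
  calc d ≤ (b₁ ⊔ b₂ ⊔ x) ⊓ (b₁ ⊔ b₂ ⊔ y) :=
        le_inf (hdb₁.trans (sup_le_sup_right le_sup_left _))
          (hdb₂.trans (sup_le_sup_right le_sup_right _))
    _ = b₁ ⊔ b₂ := h _ (isCompactElement_sup hb₁ hb₂)
    _ ≤ a := sup_le hb₁a hb₂a

end CompleteLattice

theorem stmt_5_general (L : Type*) [CompleteLattice L] [IsCompactlyGenerated L]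
    (star : L → L)
    (h : ∀ a c : L, IsCompactElement a → IsCompactElement c →
      (a ⊔ star c) ⊓ (a ⊔ star (star c)) = a) :
    ∀ a c : L, IsCompactElement c → (a ⊔ star c) ⊓ (a ⊔ star (star c)) = a :=
  fun a _ hc => sup_inf_sup_eq_of_forall_isCompactElement (fun b hb => h b _ hb hc) a

/-- If a = (a + c*) ⊓ (a + c**) holds for all compact a, c, then it holds for all
a ∈ L and compact c. -/
theorem stmt_5 (L : Type*) [CompleteLattice L] [IsCompactlyGenerated L]
    (star : L → L)
    (hstar_cpt : ∀ c : L, IsCompactElement c → IsCompactElement (star c))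
    (hjoin : ∀ c : L, IsCompactElement c → c ⊔ star c = ⊤)
    (hleast : ∀ c b : L, IsCompactElement c → IsCompactElement b → c ⊔ b = ⊤ → star c ≤ b)
    (h : ∀ a c : L, IsCompactElement a → IsCompactElement c →
      (a ⊔ star c) ⊓ (a ⊔ star (star c)) = a) :
    ∀ a c : L, IsCompactElement c → (a ⊔ star c) ⊓ (a ⊔ star (star c)) = a :=
  stmt_5_general L star h
end

section
/- Let L be an algebraic lattice whose join-semilattice of compact elements is dually pseudo-complemented, with greatest element 1. If a = (a + c*) ⊓ (a + c**) for every a ∈ L and compact c, then for every meet-irreducible element a ∈ L with a ≠ 1, the interval [a,1) has a greatest element. -/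
open CompleteLattice

/-!
Since `c* = ⊤` for `c = ⊥`, the top element is compact, so a directed family of elements
`< ⊤` has its supremum `< ⊤`; it therefore suffices that the elements of `[a, ⊤)` are closed
under `⊔`. Meet-irreducibility of `a` turns the hypothesis into: `c* ≤ a` or `c** ≤ a` for every
compact `c`. If `x, y ∈ [a, ⊤)` had `x ⊔ y = ⊤`, compactness of `⊤` would give compact `p ≤ x`,
`q ≤ y` with `p ⊔ q = ⊤`. Then `p* ≤ a` is impossible (it gives `x ≥ p ⊔ p* = ⊤`), so `p** ≤ a`;
but `p* ≤ q` forces `q* ≤ p** ≤ a`, and then `y ≥ q ⊔ q* = ⊤`.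
-/

section CompactlyGenerated

variable {L : Type*} [CompleteLattice L]

lemma isCompactElement_bot_s6 : IsCompactElement (⊥ : L) := by
  simpa using isCompactElement_finsetSup (f := id) (∅ : Finset L) (by simp)

variable [IsCompactlyGenerated L]

lemma exists_isCompactElement_le_sup_eq_top (htop : IsCompactElement (⊤ : L)) {x y : L}
    (hxy : x ⊔ y = ⊤) : ∃ p, IsCompactElement p ∧ p ≤ x ∧ p ⊔ y = ⊤ := by
  classical
  have hcover : ⊤ ≤ sSup (insert y {c : L | IsCompactElement c ∧ c ≤ x}) := by
    rw [sSup_insert, sSup_compact_le_eq, sup_comm, hxy]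
  obtain ⟨t, hts, hle⟩ := (isCompactElement_iff_exists_le_sSup_of_le_sSup L ⊤).mp htop _ hcover
  have hmem : ∀ c ∈ t.erase y, IsCompactElement c ∧ c ≤ x := fun c hc =>
    (hts (Finset.mem_of_mem_erase hc)).resolve_left (Finset.ne_of_mem_erase hc)
  refine ⟨(t.erase y).sup id, isCompactElement_finsetSup _ fun c hc => (hmem c hc).1,
    Finset.sup_le fun c hc => (hmem c hc).2, top_unique (hle.trans ?_)⟩
  calc t.sup id ≤ (insert y (t.erase y)).sup id := Finset.sup_mono (Finset.insert_erase_subset ..)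
    _ = (t.erase y).sup id ⊔ y := by rw [Finset.sup_insert, id, sup_comm]

lemma exists_isCompactElement_pair_sup_eq_top (htop : IsCompactElement (⊤ : L)) {x y : L}
    (hxy : x ⊔ y = ⊤) :
    ∃ p q, IsCompactElement p ∧ IsCompactElement q ∧ p ≤ x ∧ q ≤ y ∧ p ⊔ q = ⊤ := by
  obtain ⟨p, hp, hpx, hpy⟩ := exists_isCompactElement_le_sup_eq_top htop hxy
  obtain ⟨q, hq, hqy, hqp⟩ :=
    exists_isCompactElement_le_sup_eq_top htop ((sup_comm y p).trans hpy)
  exact ⟨p, q, hp, hq, hpx, hqy, (sup_comm p q).trans hqp⟩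

end CompactlyGenerated

section DualPseudocomplement

variable {L : Type*} [CompleteLattice L] {star : L → L}

lemma eq_top_of_le_of_star_le (hjoin : ∀ c : L, IsCompactElement c → c ⊔ star c = ⊤)
    {c x : L} (hc : IsCompactElement c) (hcx : c ≤ x) (hsx : star c ≤ x) : x = ⊤ :=
  top_unique ((hjoin c hc).symm.le.trans (sup_le hcx hsx))

lemma star_le_star_star_of_sup_eq_top
    (hstar_cpt : ∀ c : L, IsCompactElement c → IsCompactElement (star c))
    (hjoin : ∀ c : L, IsCompactElement c → c ⊔ star c = ⊤)
    (hleast : ∀ c b : L, IsCompactElement c → IsCompactElement b → c ⊔ b = ⊤ → star c ≤ b)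
    {p q : L} (hp : IsCompactElement p) (hq : IsCompactElement q) (hpq : p ⊔ q = ⊤) :
    star q ≤ star (star p) := by
  have hsp : IsCompactElement (star p) := hstar_cpt p hp
  refine hleast q _ hq (hstar_cpt _ hsp) (top_unique ?_)
  calc ⊤ = star p ⊔ star (star p) := (hjoin _ hsp).symm
    _ ≤ q ⊔ star (star p) := sup_le_sup_right (hleast p q hp hq hpq) _

lemma star_le_or_star_star_le
    (h : ∀ a c : L, IsCompactElement c → (a ⊔ star c) ⊓ (a ⊔ star (star c)) = a)
    {a : L} (hmi : ∀ x y : L, a = x ⊓ y → a = x ∨ a = y) {c : L} (hc : IsCompactElement c) :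
    star c ≤ a ∨ star (star c) ≤ a :=
  (hmi _ _ (h a c hc).symm).imp (fun e => le_sup_right.trans_eq e.symm)
    (fun e => le_sup_right.trans_eq e.symm)

end DualPseudocomplement

/-- If a = (a + c*) ⊓ (a + c**) for every a ∈ L and compact c, then for every
meet-irreducible a ≠ 1, the interval [a,1) has a greatest element. -/
theorem stmt_6 (L : Type*) [CompleteLattice L] [IsCompactlyGenerated L]
    (star : L → L)
    (hstar_cpt : ∀ c : L, IsCompactElement c → IsCompactElement (star c))
    (hjoin : ∀ c : L, IsCompactElement c → c ⊔ star c = ⊤)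
    (hleast : ∀ c b : L, IsCompactElement c → IsCompactElement b → c ⊔ b = ⊤ → star c ≤ b)
    (h : ∀ a c : L, IsCompactElement c → (a ⊔ star c) ⊓ (a ⊔ star (star c)) = a)
    (a : L) (ha : a ≠ ⊤)
    (hmi : ∀ x y : L, a = x ⊓ y → a = x ∨ a = y) :
    ∃ m : L, a ≤ m ∧ m < ⊤ ∧ ∀ d : L, a ≤ d → d < ⊤ → d ≤ m := by
  have hstar_bot : star ⊥ = ⊤ := (bot_sup_eq _).symm.trans (hjoin ⊥ isCompactElement_bot_s6)
  have htop : IsCompactElement (⊤ : L) := hstar_bot ▸ hstar_cpt ⊥ isCompactElement_bot_s6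
  have hsup : ∀ x y : L, a ≤ x → a ≤ y → x ≠ ⊤ → y ≠ ⊤ → x ⊔ y ≠ ⊤ := by
    intro x y hax hay hx hy hxy
    obtain ⟨p, q, hp, hq, hpx, hqy, hpq⟩ := exists_isCompactElement_pair_sup_eq_top htop hxy
    have hssp : star (star p) ≤ a := (star_le_or_star_star_le h hmi hp).resolve_left
      fun hsp => hx (eq_top_of_le_of_star_le hjoin hp hpx (hsp.trans hax))
    have hsq : star q ≤ a :=
      (star_le_star_star_of_sup_eq_top hstar_cpt hjoin hleast hp hq hpq).trans hssp
    exact hy (eq_top_of_le_of_star_le hjoin hq hqy (hsq.trans hay))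
  set D : Set L := {x | a ≤ x ∧ x < ⊤}
  have haD : a ∈ D := ⟨le_rfl, ha.lt_top⟩
  have hD : DirectedOn (· ≤ ·) D := fun x hx y hy =>
    ⟨x ⊔ y, ⟨le_sup_of_le_left hx.1, (hsup x y hx.1 hy.1 hx.2.ne hy.2.ne).lt_top⟩,
      le_sup_left, le_sup_right⟩
  exact ⟨sSup D, le_sSup haD, htop.directed_sSup_lt_of_lt ⟨a, haD⟩ hD fun x hx => hx.2,
    fun d had hd => le_sSup ⟨had, hd⟩⟩
end

section
/- Let L be an algebraic lattice whose join-semilattice of compact elements is dually pseudo-complemented, with greatest element 1. If for every completely meet-irreducible a ∈ L the element 1 is join-irreducible in the interval [a,1], then a = (a + c*) ⊓ (a + c**) for all compact a, c. -/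
/-!
Suppose `a < (a ⊔ c*) ⊓ (a ⊔ c**)`. Separate them by a completely meet-irreducible `m ≥ a`
(Zorn, using compact generation). Since `c* ⊔ c** = ⊤`, the elements `m ⊔ c*` and `m ⊔ c**`
join to `⊤`, so one of them is `⊤`. As `⊤ = c ⊔ c*` is compact, `m ⊔ x = ⊤` with `x` compact
yields a compact `d ≤ m` with `x ⊔ d = ⊤`, whence `x* ≤ d ≤ m`. Applied to `x = c*`, or to
`x = c` (note `c** ≤ c`), this puts `c**` or `c*` below `m`, contradicting the choice of `m`.
-/

open CompleteLattice

namespace CompleteLattice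

variable {L : Type*} [CompleteLattice L]

def IsCompletelyMeetIrreducible (a : L) : Prop :=
  ∀ X : Set L, a = sInf X → a ∈ X

theorem isCompactElement_bot : IsCompactElement (⊥ : L) := by
  simpa using isCompactElement_finsetSup (f := id) (∅ : Finset L) (by simp)

theorem IsCompactElement.sup {x y : L} (hx : IsCompactElement x) (hy : IsCompactElement y) :
    IsCompactElement (x ⊔ y) := by
  rw [isCompactElement_iff_le_of_directed_sSup_le] at hx hy ⊢
  intro s hne hdir hle
  obtain ⟨u, hus, hxu⟩ := hx s hne hdir (le_sup_left.trans hle)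
  obtain ⟨v, hvs, hyv⟩ := hy s hne hdir (le_sup_right.trans hle)
  obtain ⟨w, hws, huw, hvw⟩ := hdir u hus v hvs
  exact ⟨w, hws, sup_le (hxu.trans huw) (hyv.trans hvw)⟩

theorem isCompletelyMeetIrreducible_of_maximal_not_le {k m : L}
    (hmax : Maximal (fun z => ¬ k ≤ z) m) : IsCompletelyMeetIrreducible m := by
  intro X hX
  by_contra hmX
  have hk_above : ∀ x ∈ X, k ≤ x := by
    intro x hxX
    have hmx : m ≤ x := hX ▸ sInf_le hxX
    by_contra hkx
    exact hmX (le_antisymm hmx (hmax.2 hkx hmx) ▸ hxX)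
  exact hmax.1 (hX ▸ le_sInf hk_above)

theorem IsCompactElement.exists_isCompletelyMeetIrreducible {k a : L}
    (hk : IsCompactElement k) (hka : ¬ k ≤ a) :
    ∃ m, IsCompletelyMeetIrreducible m ∧ a ≤ m ∧ ¬ k ≤ m := by
  obtain ⟨m, ham, hmax⟩ : ∃ m, a ≤ m ∧ Maximal (· ∈ {z : L | a ≤ z ∧ ¬ k ≤ z}) m := by
    refine zorn_le_nonempty₀ _ (fun C hC hchain y hyC => ?_) a ⟨le_rfl, hka⟩
    refine ⟨sSup C, ⟨(hC hyC).1.trans (le_sSup hyC), fun hkC => ?_⟩, fun z hz => le_sSup hz⟩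
    obtain ⟨x, hxC, hkx⟩ := (isCompactElement_iff_le_of_directed_sSup_le L k).mp hk C
      ⟨y, hyC⟩ hchain.directedOn hkC
    exact (hC hxC).2 hkx
  refine ⟨m, isCompletelyMeetIrreducible_of_maximal_not_le ⟨hmax.1.2, ?_⟩, ham, hmax.1.2⟩
  exact fun z hkz hmz => hmax.2 ⟨ham.trans hmz, hkz⟩ hmz

variable [IsCompactlyGenerated L]

theorem exists_isCompletelyMeetIrreducible_of_not_le {a b : L} (hba : ¬ b ≤ a) :
    ∃ m, IsCompletelyMeetIrreducible m ∧ a ≤ m ∧ ¬ b ≤ m := by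
  obtain ⟨k, hk, hkb, hka⟩ : ∃ k, IsCompactElement k ∧ k ≤ b ∧ ¬ k ≤ a := by
    simpa [le_iff_compact_le_imp (a := b)] using hba
  obtain ⟨m, hm, ham, hkm⟩ := hk.exists_isCompletelyMeetIrreducible hka
  exact ⟨m, hm, ham, fun hbm => hkm (hkb.trans hbm)⟩

theorem IsCompactElement.exists_compact_le_of_le_sup {k x m : L} (hk : IsCompactElement k)
    (hle : k ≤ x ⊔ m) : ∃ d, IsCompactElement d ∧ d ≤ m ∧ k ≤ x ⊔ d := by
  set S : Set L := (x ⊔ ·) '' {d | IsCompactElement d ∧ d ≤ m}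
  have hbot : x ⊔ ⊥ ∈ S := ⟨⊥, ⟨isCompactElement_bot, bot_le⟩, rfl⟩
  have hdir : DirectedOn (· ≤ ·) S := by
    rintro _ ⟨d₁, ⟨hd₁, hd₁m⟩, rfl⟩ _ ⟨d₂, ⟨hd₂, hd₂m⟩, rfl⟩
    exact ⟨x ⊔ (d₁ ⊔ d₂), ⟨d₁ ⊔ d₂, ⟨hd₁.sup hd₂, sup_le hd₁m hd₂m⟩, rfl⟩,
      sup_le_sup_left le_sup_left x, sup_le_sup_left le_sup_right x⟩
  have hsup : x ⊔ m ≤ sSup S := by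
    refine sup_le (le_sSup_of_le hbot le_sup_left) ?_
    rw [← sSup_compact_le_eq m]
    exact sSup_le fun d hd => le_sSup_of_le ⟨d, hd, rfl⟩ le_sup_right
  obtain ⟨_, ⟨d, ⟨hd, hdm⟩, rfl⟩, hkd⟩ :=
    (isCompactElement_iff_le_of_directed_sSup_le L k).mp hk S ⟨_, hbot⟩ hdir (hle.trans hsup)
  exact ⟨d, hd, hdm, hkd⟩

end CompleteLattice

/-- If for every completely meet-irreducible a, 1 is join-irreducible in [a,1],
then a = (a + c*) ⊓ (a + c**) for all compact a, c. -/
theorem stmt_7 (L : Type*) [CompleteLattice L] [IsCompactlyGenerated L]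
    (star : L → L)
    (hstar_cpt : ∀ c : L, IsCompactElement c → IsCompactElement (star c))
    (hjoin : ∀ c : L, IsCompactElement c → c ⊔ star c = ⊤)
    (hleast : ∀ c b : L, IsCompactElement c → IsCompactElement b → c ⊔ b = ⊤ → star c ≤ b)
    (h : ∀ a : L, (∀ X : Set L, a = sInf X → a ∈ X) →
      ∀ x y : L, a ≤ x → a ≤ y → x ⊔ y = ⊤ → x = ⊤ ∨ y = ⊤) :
    ∀ a c : L, IsCompactElement a → IsCompactElement c →
      (a ⊔ star c) ⊓ (a ⊔ star (star c)) = a := by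
  intro a c _ hc
  have hc' : IsCompactElement (star c) := hstar_cpt c hc
  have htop : IsCompactElement (⊤ : L) := hjoin c hc ▸ hc.sup hc'
  have hc'' : star (star c) ≤ c := hleast _ c hc' hc (by rw [sup_comm, hjoin c hc])
  refine le_antisymm ?_ (le_inf le_sup_left le_sup_left)
  by_contra hle
  obtain ⟨m, hm, ham, hnot⟩ := exists_isCompletelyMeetIrreducible_of_not_le hle
  have star_le : ∀ x, IsCompactElement x → m ⊔ x = ⊤ → star x ≤ m := by
    intro x hx hmx
    obtain ⟨d, hd, hdm, hxd⟩ := htop.exists_compact_le_of_le_sup (x := x) (m := m)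
      (by rw [sup_comm, hmx])
    exact (hleast x d hx hd (top_unique hxd)).trans hdm
  have hsplit : (m ⊔ star c) ⊔ (m ⊔ star (star c)) = ⊤ :=
    top_unique <| hjoin _ hc' ▸ sup_le_sup le_sup_right le_sup_right
  rcases h m hm _ _ le_sup_left le_sup_left hsplit with h₁ | h₂
  · exact hnot (inf_le_right.trans (sup_le ham (star_le _ hc' h₁)))
  · have hmc : m ⊔ c = ⊤ := top_unique (h₂ ▸ sup_le_sup_left hc'' m)
    exact hnot (inf_le_left.trans (sup_le ham (star_le c hc hmc)))
end

section
/- Let L be an algebraic lattice whose join-semilattice of compact elements is dually pseudo-complemented, with greatest element 1. If a = (a + c) ⊓ (a + c*) for every a ∈ L and every compact c, then every meet-irreducible a ∈ L with a ≠ 1 satisfies [a,1] = {a,1}, i.e., a is a coatom. -/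
open CompleteLattice

/-!
Take `a ≤ x` with `x ≠ a`. Since `L` is compactly generated, some compact `c ≤ x` lies outside
`a`. Meet-irreducibility applied to `a = (a ⊔ c) ⊓ (a ⊔ c*)` then forces `c* ≤ a`, so
`x ≥ c ⊔ c* = ⊤`.
-/

theorem le_of_sup_inf_sup_eq_of_not_le {L : Type*} [Lattice L] {a c d : L}
    (hmi : ∀ x y : L, a = x ⊓ y → a = x ∨ a = y) (hcd : (a ⊔ c) ⊓ (a ⊔ d) = a)
    (hca : ¬c ≤ a) : d ≤ a := by
  rcases hmi (a ⊔ c) (a ⊔ d) hcd.symm with hc | hd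
  · exact absurd (le_sup_right.trans hc.ge) hca
  · exact le_sup_right.trans hd.ge

theorem exists_isCompactElement_le_not_le {L : Type*} [CompleteLattice L]
    [IsCompactlyGenerated L] {a x : L} (hxa : ¬x ≤ a) :
    ∃ c, IsCompactElement c ∧ c ≤ x ∧ ¬c ≤ a := by
  simpa [le_iff_compact_le_imp (a := x) (b := a)] using hxa

theorem stmt_9_general (L : Type*) [CompleteLattice L] [IsCompactlyGenerated L]
    (star : L → L)
    (hjoin : ∀ c : L, IsCompactElement c → c ⊔ star c = ⊤)
    (h : ∀ a c : L, IsCompactElement c → (a ⊔ c) ⊓ (a ⊔ star c) = a)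
    (a : L)
    (hmi : ∀ x y : L, a = x ⊓ y → a = x ∨ a = y) :
    ∀ x : L, a ≤ x → x = a ∨ x = ⊤ := by
  intro x hax
  refine or_iff_not_imp_left.2 fun hxa => ?_
  obtain ⟨c, hc, hcx, hca⟩ :=
    exists_isCompactElement_le_not_le fun hxa' => hxa (le_antisymm hxa' hax)
  have hstar : star c ≤ a := le_of_sup_inf_sup_eq_of_not_le hmi (h a c hc) hca
  rw [eq_top_iff, ← hjoin c hc]
  exact sup_le hcx (hstar.trans hax)

/-- If a = (a + c) ⊓ (a + c*) for every a ∈ L and compact c, then every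
meet-irreducible a ≠ 1 is a coatom. -/
theorem stmt_9 (L : Type*) [CompleteLattice L] [IsCompactlyGenerated L]
    (star : L → L)
    (hstar_cpt : ∀ c : L, IsCompactElement c → IsCompactElement (star c))
    (hjoin : ∀ c : L, IsCompactElement c → c ⊔ star c = ⊤)
    (hleast : ∀ c b : L, IsCompactElement c → IsCompactElement b → c ⊔ b = ⊤ → star c ≤ b)
    (h : ∀ a c : L, IsCompactElement c → (a ⊔ c) ⊓ (a ⊔ star c) = a)
    (a : L) (ha : a ≠ ⊤)
    (hmi : ∀ x y : L, a = x ⊓ y → a = x ∨ a = y) :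
    ∀ x : L, a ≤ x → x = a ∨ x = ⊤ :=
  stmt_9_general L star hjoin h a hmi
end

section
/- Let L be an algebraic lattice whose join-semilattice of compact elements is dually pseudo-complemented, with greatest element 1. If every completely meet-irreducible element a of L satisfies [a,1] = {a,1}, then a = (a + c) ⊓ (a + c*) for every a ∈ L and every compact c. -/
open CompleteLattice

/-!
If `x := (a ⊔ c) ⊓ (a ⊔ c*)` were strictly above `a`, some compact `d ≤ x` would satisfy `d ≰ a`.
By Zorn there is `m ≥ a` maximal with `d ≰ m`; such an `m` is completely meet-irreducible, hence
`[m, ⊤] = {m, ⊤}`. Then either `c ≤ m`, or `c ⊔ m = ⊤`, and compactness of `c*` yields a compact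
`b ≤ m` with `c* ≤ c ⊔ b`, so `c ⊔ b = ⊤` and `c* ≤ b ≤ m`. In both cases `d ≤ x ≤ m`, a contradiction.
-/

def IsCompletelyInfIrred {L : Type*} [CompleteLattice L] (a : L) : Prop :=
  ∀ X : Set L, a = sInf X → a ∈ X

section

variable {L : Type*} [CompleteLattice L]

theorem IsCompactElement.exists_le_maximal_not_le {d a : L} (hd : IsCompactElement d)
    (hda : ¬ d ≤ a) : ∃ m, a ≤ m ∧ Maximal (fun y => ¬ d ≤ y) m :=
  zorn_le_nonempty₀ {y | ¬ d ≤ y} (fun ch hch hchain y hy => by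
    refine ⟨sSup ch, fun hd_le => ?_, fun z hz => le_sSup hz⟩
    obtain ⟨z, hz, hdz⟩ := (isCompactElement_iff_le_of_directed_sSup_le L d).mp hd ch ⟨y, hy⟩
      hchain.directedOn hd_le
    exact hch hz hdz) a hda

theorem Maximal.isCompletelyInfIrred_of_not_le {d m : L} (hm : Maximal (fun y => ¬ d ≤ y) m) :
    IsCompletelyInfIrred m := by
  intro X hX
  by_contra hmX
  refine hm.prop (hX ▸ le_sInf fun y hy => ?_)
  have hmy : m ≤ y := hX ▸ sInf_le hy
  by_contra hdy
  exact hmX (le_antisymm (hm.2 hdy hmy) hmy ▸ hy)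

theorem IsCompactElement.exists_compact_le_of_le_sup [IsCompactlyGenerated L] {k c m : L}
    (hk : IsCompactElement k) (h : k ≤ c ⊔ m) :
    ∃ b, IsCompactElement b ∧ b ≤ m ∧ k ≤ c ⊔ b := by
  classical
  set S := {e | IsCompactElement e ∧ e ≤ m}
  have hkS : k ≤ sSup (insert c S) := by rwa [sSup_insert, sSup_compact_le_eq m]
  obtain ⟨t, htS, hkt⟩ := (isCompactElement_iff_exists_le_sSup_of_le_sSup L k).mp hk _ hkS
  have hS : ∀ e ∈ t.erase c, e ∈ S := fun e he =>
    (htS (Finset.mem_of_mem_erase he)).resolve_left (Finset.ne_of_mem_erase he)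
  refine ⟨(t.erase c).sup id, isCompactElement_finsetSup _ fun e he => (hS e he).1,
    Finset.sup_le fun e he => (hS e he).2, hkt.trans ?_⟩
  calc t.sup id ≤ (insert c (t.erase c)).sup id := Finset.sup_mono (Finset.insert_erase_subset c t)
    _ = c ⊔ (t.erase c).sup id := Finset.sup_insert

/-- Here `s` plays the role of the dual pseudo-complement `c*` of `c`. -/
theorem le_or_le_of_forall_le_eq_or_eq_top [IsCompactlyGenerated L] {m c s : L}
    (hm : ∀ x, m ≤ x → x = m ∨ x = ⊤) (hs : IsCompactElement s) (hcs : c ⊔ s = ⊤)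
    (hleast : ∀ b, IsCompactElement b → c ⊔ b = ⊤ → s ≤ b) : c ≤ m ∨ s ≤ m := by
  refine or_iff_not_imp_left.mpr fun hcm => ?_
  have hmc : c ⊔ m = ⊤ := (hm _ le_sup_right).resolve_left fun e => hcm (e ▸ le_sup_left)
  obtain ⟨b, hb, hbm, hsb⟩ := hs.exists_compact_le_of_le_sup (hmc ▸ le_top)
  have hcb : c ⊔ b = ⊤ := top_le_iff.mp (hcs ▸ sup_le le_sup_left hsb)
  exact (hleast b hb hcb).trans hbm

end

/-- If every completely meet-irreducible element is a coatom, then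
a = (a + c) ⊓ (a + c*) for every a ∈ L and compact c. -/
theorem stmt_10 (L : Type*) [CompleteLattice L] [IsCompactlyGenerated L]
    (star : L → L)
    (hstar_cpt : ∀ c : L, IsCompactElement c → IsCompactElement (star c))
    (hjoin : ∀ c : L, IsCompactElement c → c ⊔ star c = ⊤)
    (hleast : ∀ c b : L, IsCompactElement c → IsCompactElement b → c ⊔ b = ⊤ → star c ≤ b)
    (h : ∀ a : L, (∀ X : Set L, a = sInf X → a ∈ X) →
      ∀ x : L, a ≤ x → x = a ∨ x = ⊤) :
    ∀ a c : L, IsCompactElement c → (a ⊔ c) ⊓ (a ⊔ star c) = a := by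
  intro a c hc
  refine le_antisymm (le_iff_compact_le_imp.mpr fun d hd hdx => ?_) (le_inf le_sup_left le_sup_left)
  by_contra hda
  obtain ⟨m, ham, hm⟩ := hd.exists_le_maximal_not_le hda
  have hcases := le_or_le_of_forall_le_eq_or_eq_top (h m hm.isCompletelyInfIrred_of_not_le)
    (hstar_cpt c hc) (hjoin c hc) fun b hb => hleast c b hc hb
  refine hm.prop (hdx.trans ?_)
  rcases hcases with hcm | hsm
  · exact inf_le_left.trans (sup_le ham hcm)
  · exact inf_le_right.trans (sup_le ham hsm)
end

section
/- In a rigorously compact De Morgan monoid A with least element ⊥ and greatest element ⊤, the singleton {⊥} is an equivalence class of every proper congruence of A; equivalently, if a congruence θ identifies ⊥ with some element a ≠ ⊥, then θ = A × A. -/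
/-- A De Morgan monoid: a distributive lattice and a square-increasing commutative
monoid with an involution ¬ satisfying x·y ≤ z ⟺ x·¬z ≤ ¬y. -/
class DeMorganMonoid (A : Type*) extends DistribLattice A, CommMonoid A where
  neg : A → A
  square_increasing : ∀ x : A, x ≤ x * x
  neg_neg : ∀ x : A, neg (neg x) = x
  contra : ∀ x y z : A, x * y ≤ z ↔ x * neg z ≤ neg y

open DeMorganMonoid

/-- A congruence of a De Morgan monoid. -/
structure IsDMMCongruence {A : Type*} [DeMorganMonoid A] (r : A → A → Prop) : Prop where
  refl : ∀ x, r x x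
  symm : ∀ {x y}, r x y → r y x
  trans : ∀ {x y z}, r x y → r y z → r x z
  mul_compat : ∀ {x y u v}, r x y → r u v → r (x * u) (y * v)
  inf_compat : ∀ {x y u v}, r x y → r u v → r (x ⊓ u) (y ⊓ v)
  sup_compat : ∀ {x y u v}, r x y → r u v → r (x ⊔ u) (y ⊔ v)
  neg_compat : ∀ {x y}, r x y → r (neg x) (neg y)

/-!
Since ⊥ is absorbing for `·`, multiplying `⊥ θ a` by `⊤` gives `⊥ θ a·⊤ = ⊤`, and meeting
`⊥ θ ⊤` with any `x` gives `⊥ θ x`.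
-/

namespace DeMorganMonoid

variable {A : Type*} [DeMorganMonoid A]

theorem le_iff_neg_le_neg (y z : A) : y ≤ z ↔ neg z ≤ neg y := by
  simpa using contra (1 : A) y z

theorem le_neg_bot [OrderBot A] (x : A) : x ≤ neg ⊥ := by
  simpa [DeMorganMonoid.neg_neg] using (le_iff_neg_le_neg ⊥ (neg x)).mp bot_le

theorem mul_bot [OrderBot A] (x : A) : x * ⊥ = ⊥ :=
  le_antisymm ((contra x ⊥ ⊥).mpr (le_neg_bot _)) bot_le

theorem bot_mul [OrderBot A] (x : A) : ⊥ * x = ⊥ := by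
  rw [mul_comm, mul_bot]

end DeMorganMonoid

namespace IsDMMCongruence

variable {A : Type*} [DeMorganMonoid A] {θ : A → A → Prop}

theorem rel_bot_of_rel_bot_top [OrderBot A] [OrderTop A] (hθ : IsDMMCongruence θ)
    (h : θ ⊥ ⊤) (x : A) : θ ⊥ x := by
  simpa using hθ.inf_compat h (hθ.refl x)

theorem rel_of_rel_bot_top [OrderBot A] [OrderTop A] (hθ : IsDMMCongruence θ)
    (h : θ ⊥ ⊤) (x y : A) : θ x y :=
  hθ.trans (hθ.symm (hθ.rel_bot_of_rel_bot_top h x)) (hθ.rel_bot_of_rel_bot_top h y)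

end IsDMMCongruence

/-- In a rigorously compact De Morgan monoid, {⊥} is a class of every proper
congruence: a congruence identifying ⊥ with some a ≠ ⊥ is the total relation. -/
theorem stmt_15 (A : Type*) [DeMorganMonoid A] [OrderBot A] [OrderTop A]
    (hrc : ∀ a : A, a ≠ ⊥ → a * ⊤ = ⊤)
    (θ : A → A → Prop) (hθ : IsDMMCongruence θ)
    (a : A) (ha : a ≠ ⊥) (hba : θ ⊥ a) :
    ∀ x y : A, θ x y := by
  have hbot_top : θ ⊥ ⊤ := by
    simpa only [bot_mul, hrc a ha] using hθ.mul_compat hba (hθ.refl ⊤)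
  exact hθ.rel_of_rel_bot_top hbot_top
end

section
/- An idempotent De Morgan monoid (one satisfying x·x = x for all x) satisfies f ≤ e, where f := ¬e. Conversely, a De Morgan monoid satisfying f ≤ e is idempotent. -/
open DeMorganMonoid

/-!
Both directions come from the contraposition law at `x * x ≤ x`, which reads `x * ¬x ≤ ¬x`.
If every element is idempotent, take `x = f`: then `f * e ≤ e`, i.e. `f ≤ e`. Conversely, if
`f ≤ e` then `x * ¬x ≤ f ≤ e`, so `x * ¬x ≤ x * ¬x * ¬x ≤ ¬x` by square-increasingness of `¬x`;
hence `x * x ≤ x`, and `x ≤ x * x` holds anyway.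
-/

namespace DeMorganMonoid

variable {A : Type*} [DeMorganMonoid A]

theorem neg_antitone : Antitone (neg : A → A) := fun a b h => by
  simpa only [one_mul] using (contra 1 a b).mp (by rwa [one_mul])

instance : IsOrderedMonoid A where
  mul_le_mul_left a b h c := by
    have hb : c * neg (b * c) ≤ neg b := (contra c b (b * c)).mp (mul_comm c b).le
    rw [mul_comm a c]
    exact (contra c a (b * c)).mpr (hb.trans (neg_antitone h))

theorem mul_neg_self_le (x : A) : x * neg x ≤ neg 1 :=
  (contra x 1 x).mp (mul_one x).le

theorem neg_one_le_one_of_mul_self_le (h : neg (1 : A) * neg 1 ≤ neg 1) : neg (1 : A) ≤ 1 := by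
  simpa only [neg_neg, mul_one] using (contra _ _ _).mp h

theorem mul_self_eq_of_neg_one_le_one (hf : neg (1 : A) ≤ 1) (x : A) : x * x = x := by
  refine le_antisymm ((contra x x x).mpr ?_) (square_increasing x)
  calc x * neg x ≤ x * (neg x * neg x) := mul_le_mul_right (square_increasing _) x
    _ = x * neg x * neg x := (mul_assoc _ _ _).symm
    _ ≤ 1 * neg x := mul_le_mul_left ((mul_neg_self_le x).trans hf) _
    _ = neg x := one_mul _

end DeMorganMonoid

/-- A De Morgan monoid is idempotent iff f ≤ e, where f = ¬e. -/
theorem stmt_19 (A : Type*) [DeMorganMonoid A] :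
    (∀ x : A, x * x = x) ↔ neg (1 : A) ≤ 1 :=
  ⟨fun h => neg_one_le_one_of_mul_self_le (h _).le, mul_self_eq_of_neg_one_le_one⟩
end
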